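/- For each fixed q > 0, the generating functions g₁ = 1, g₂ = u_x, g₃ = (q − u_x)·u − (1 + q·u_x)·x satisfy the A_{3.9} commutation relations under the contact bracket: [g₁,g₂] = 0, [g₁,g₃] = q·g₁ − g₂, [g₂,g₃] = g₁ + q·g₂. -/

import Mathlib

/-- Partial derivative in direction `i` of a function on `ℝ⁵ = Fin 5 → ℝ`.
Coordinates: 0 = t, 1 = x, 2 = u, 3 = p (= u_t), 4 = q (= u_x). -/
noncomputable def pd (i : Fin 5) (f : (Fin 5 → ℝ) → ℝ) (v : Fin 5 → ℝ) : ℝ :=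
  fderiv ℝ f v (Pi.single i 1)

/-- The contact bracket of two generating functions. -/
noncomputable def cbracket (f g : (Fin 5 → ℝ) → ℝ) (v : Fin 5 → ℝ) : ℝ :=
  (pd 3 g v * pd 2 f v - pd 3 f v * pd 2 g v) * v 3
  + (pd 4 g v * pd 2 f v - pd 4 f v * pd 2 g v) * v 4
  + pd 3 g v * pd 0 f v - pd 3 f v * pd 0 g v
  + pd 4 g v * pd 1 f v - pd 4 f v * pd 1 g v
  + f v * pd 2 g v - g v * pd 2 f v

section PartialDerivative

variable {i : Fin 5} {f g : (Fin 5 → ℝ) → ℝ} {v : Fin 5 → ℝ}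

lemma pd_const (c : ℝ) : pd i (fun _ => c) v = 0 := by
  simp [pd]

lemma pd_coord (j : Fin 5) : pd i (fun w => w j) v = if i = j then 1 else 0 := by
  simp [pd, fderiv_apply, Pi.single_apply, eq_comm]

lemma pd_add (hf : DifferentiableAt ℝ f v) (hg : DifferentiableAt ℝ g v) :
    pd i (fun w => f w + g w) v = pd i f v + pd i g v := by
  simp [pd, fderiv_fun_add hf hg]

lemma pd_sub (hf : DifferentiableAt ℝ f v) (hg : DifferentiableAt ℝ g v) :
    pd i (fun w => f w - g w) v = pd i f v - pd i g v := by
  simp [pd, fderiv_fun_sub hf hg]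

lemma pd_mul (hf : DifferentiableAt ℝ f v) (hg : DifferentiableAt ℝ g v) :
    pd i (fun w => f w * g w) v = f v * pd i g v + g v * pd i f v := by
  simp [pd, fderiv_fun_mul hf hg]

end PartialDerivative

lemma pd_g3 (q : ℝ) (i : Fin 5) (v : Fin 5 → ℝ) :
    pd i (fun w => (q - w 4) * w 2 - (1 + q * w 4) * w 1) v =
      (q - v 4) * (if i = 2 then 1 else 0) - (1 + q * v 4) * (if i = 1 then 1 else 0)
        - (v 2 + q * v 1) * (if i = 4 then 1 else 0) := by
  simp (disch := fun_prop) only [pd_sub, pd_add, pd_mul, pd_const, pd_coord]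
  ring

theorem A39_realization_general (q : ℝ) (v : Fin 5 → ℝ) :
    cbracket (fun _ => (1 : ℝ)) (fun w => w 4) v = 0 ∧
    cbracket (fun _ => (1 : ℝ))
        (fun w => (q - w 4) * w 2 - (1 + q * w 4) * w 1) v = q * 1 - v 4 ∧
    cbracket (fun w => w 4)
        (fun w => (q - w 4) * w 2 - (1 + q * w 4) * w 1) v = 1 + q * v 4 := by
  refine ⟨?_, ?_, ?_⟩ <;>
  · simp only [cbracket, pd_const, pd_coord, pd_g3, Fin.reduceEq, if_true, if_false]
    ring

/-- ⟨1, u_x, (q − u_x)·u − (1 + q·u_x)·x⟩ realizes A_{3.9} for q > 0. -/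
theorem A39_realization (q : ℝ) (hq : q > 0) (v : Fin 5 → ℝ) :
    cbracket (fun _ => (1 : ℝ)) (fun w => w 4) v = 0 ∧
    cbracket (fun _ => (1 : ℝ))
        (fun w => (q - w 4) * w 2 - (1 + q * w 4) * w 1) v = q * 1 - v 4 ∧
    cbracket (fun w => w 4)
        (fun w => (q - w 4) * w 2 - (1 + q * w 4) * w 1) v = 1 + q * v 4 :=
  A39_realization_general q v
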